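/- Let Â₊, Â₋ be elements of an associative ℝ-algebra A and p₀ > 0. For the quantum algebra V^ℏ with structure constants μ̂₁₂¹ = Â₋/√(2p₀), μ̂₁₂² = −Â₊/√(2p₀), μ̂₂₃³ = −Â₋/√(2p₀), μ̂₃₁³ = Â₊/√(2p₀), all others zero, the quantum Jacobian of the basis triple (e₁,e₂,e₃) has first and second coordinates zero, and third coordinate equal to (1/p₀)[Â₊, Â₋] = (1/p₀)(Â₊Â₋ − Â₋Â₊). In particular V^ℏ is a Lie algebra if and only if Â₊ and Â₋ commute. -/

import Mathlib

/-- Antisymmetric bracket on the rank-3 free module over an ℝ-algebra `A`,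
defined by structure constants `m i j k ∈ A`. -/
noncomputable def qbkt {A : Type*} [Ring A] [Algebra ℝ A]
    (m : Fin 3 → Fin 3 → Fin 3 → A) (x y : Fin 3 → A) : Fin 3 → A :=
  fun k => ∑ i : Fin 3, ∑ j : Fin 3, x i * y j * m i j k

/-- The quantum Jacobian `Ĵ(x,y,z) = [[x,y],z] + [[y,z],x] + [[z,x],y]`. -/
noncomputable def qjac {A : Type*} [Ring A] [Algebra ℝ A]
    (m : Fin 3 → Fin 3 → Fin 3 → A) (x y z : Fin 3 → A) : Fin 3 → A :=
  qbkt m (qbkt m x y) z + qbkt m (qbkt m y z) x + qbkt m (qbkt m z x) y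

/-- Structure constants of the quantum algebra V^ℏ:
`μ̂₁₂¹ = Â₋/√(2p₀)`, `μ̂₁₂² = −Â₊/√(2p₀)`, `μ̂₂₃³ = −Â₋/√(2p₀)`, `μ̂₃₁³ = Â₊/√(2p₀)`. -/
noncomputable def muVh {A : Type*} [Ring A] [Algebra ℝ A]
    (Ap Am : A) (p₀ : ℝ) : Fin 3 → Fin 3 → Fin 3 → A :=
  ![![![0, 0, 0], ![(Real.sqrt (2 * p₀))⁻¹ • Am, -((Real.sqrt (2 * p₀))⁻¹ • Ap), 0],
      ![0, 0, -((Real.sqrt (2 * p₀))⁻¹ • Ap)]],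
    ![![-((Real.sqrt (2 * p₀))⁻¹ • Am), (Real.sqrt (2 * p₀))⁻¹ • Ap, 0], ![0, 0, 0],
      ![0, 0, -((Real.sqrt (2 * p₀))⁻¹ • Am)]],
    ![![0, 0, (Real.sqrt (2 * p₀))⁻¹ • Ap], ![0, 0, (Real.sqrt (2 * p₀))⁻¹ • Am],
      ![0, 0, 0]]]

/-! The Jacobian is quadratic in the structure constants, so the common factor `1/√(2p₀)` of `muVh`
comes out as `1/(2p₀)`. On basis vectors the Jacobian reduces to
`∑ₐ (μᵢⱼᵃ μₐₖˡ + μⱼₖᵃ μₐᵢˡ + μₖᵢᵃ μₐⱼˡ)`, a finite computation in `A` whose only surviving term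
is the commutator `[Â₊, Â₋]` in the third coordinate of `Ĵ(e₁, e₂, e₃)`. -/

section StructureConstants

variable {A : Type*} [Ring A] [Algebra ℝ A]

theorem qbkt_single_right (m : Fin 3 → Fin 3 → Fin 3 → A) (x : Fin 3 → A) (k : Fin 3) :
    qbkt m x (fun l => if l = k then 1 else 0) = fun l => ∑ i, x i * m i k l := by
  funext l
  simp [qbkt]

theorem qjac_single (m : Fin 3 → Fin 3 → Fin 3 → A) (i j k : Fin 3) :
    qjac m (fun l => if l = i then 1 else 0) (fun l => if l = j then 1 else 0)
        (fun l => if l = k then 1 else 0) =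
      fun l => ∑ a, (m i j a * m a k l + m j k a * m a i l + m k i a * m a j l) := by
  funext l
  simp [qjac, qbkt_single_right, Finset.sum_add_distrib]

theorem qbkt_smul_left (m : Fin 3 → Fin 3 → Fin 3 → A) (c : ℝ) (x y : Fin 3 → A) :
    qbkt m (c • x) y = c • qbkt m x y := by
  funext k
  simp [qbkt, Finset.smul_sum]

theorem qbkt_smul_const (m : Fin 3 → Fin 3 → Fin 3 → A) (c : ℝ) (x y : Fin 3 → A) :
    qbkt (c • m) x y = c • qbkt m x y := by
  funext k
  simp [qbkt, Finset.smul_sum]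

theorem qjac_smul_const (m : Fin 3 → Fin 3 → Fin 3 → A) (c : ℝ) (x y z : Fin 3 → A) :
    qjac (c • m) x y z = (c * c) • qjac m x y z := by
  simp only [qjac, qbkt_smul_const, qbkt_smul_left, smul_add, smul_smul]

end StructureConstants

section Vh

variable {A : Type*} [Ring A] [Algebra ℝ A] (Ap Am : A)

def muVhUnscaled : Fin 3 → Fin 3 → Fin 3 → A :=
  ![![![0, 0, 0], ![Am, -Ap, 0], ![0, 0, -Ap]],
    ![![-Am, Ap, 0], ![0, 0, 0], ![0, 0, -Am]],
    ![![0, 0, Ap], ![0, 0, Am], ![0, 0, 0]]]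

theorem muVh_eq_smul_muVhUnscaled (p₀ : ℝ) :
    muVh Ap Am p₀ = (Real.sqrt (2 * p₀))⁻¹ • muVhUnscaled Ap Am := by
  funext i j k
  fin_cases i <;> fin_cases j <;> fin_cases k <;> simp [muVh, muVhUnscaled]

theorem qjac_muVhUnscaled_zero_one_two :
    qjac (muVhUnscaled Ap Am) (fun l => if l = 0 then 1 else 0) (fun l => if l = 1 then 1 else 0)
        (fun l => if l = 2 then 1 else 0) = ![0, 0, (2 : ℝ) • (Ap * Am - Am * Ap)] := by
  rw [qjac_single]
  funext l
  fin_cases l <;> simp [muVhUnscaled, Fin.sum_univ_three]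
  module

theorem qjac_muVhUnscaled_single_eq_zero (h : Commute Ap Am) (i j k : Fin 3) :
    qjac (muVhUnscaled Ap Am) (fun l => if l = i then 1 else 0) (fun l => if l = j then 1 else 0)
        (fun l => if l = k then 1 else 0) = 0 := by
  rw [qjac_single]
  funext l
  fin_cases i <;> fin_cases j <;> fin_cases k <;> fin_cases l <;>
    simp [muVhUnscaled, Fin.sum_univ_three, h.eq]

end Vh

/-- For V^ℏ, the quantum Jacobian of `(e₁,e₂,e₃)` is `(0, 0, (1/p₀)[Â₊,Â₋])`;
in particular V^ℏ is a Lie algebra (Jacobi on all basis triples) iff `Â₊` and `Â₋`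
commute. -/
theorem Vh_jacobian {A : Type*} [Ring A] [Algebra ℝ A]
    (Ap Am : A) (p₀ : ℝ) (hp₀ : 0 < p₀) :
    qjac (muVh Ap Am p₀)
        (fun l => if l = 0 then 1 else 0)
        (fun l => if l = 1 then 1 else 0)
        (fun l => if l = 2 then 1 else 0)
      = ![0, 0, p₀⁻¹ • (Ap * Am - Am * Ap)] ∧
    ((∀ i j k : Fin 3,
        qjac (muVh Ap Am p₀)
          (fun l => if l = i then 1 else 0)
          (fun l => if l = j then 1 else 0)
          (fun l => if l = k then 1 else 0) = 0) ↔ Ap * Am = Am * Ap) := by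
  have hc : (Real.sqrt (2 * p₀))⁻¹ * (Real.sqrt (2 * p₀))⁻¹ * 2 = p₀⁻¹ := by
    rw [← mul_inv, Real.mul_self_sqrt (by positivity)]
    field_simp
  have hmain : qjac (muVh Ap Am p₀) (fun l => if l = 0 then 1 else 0)
      (fun l => if l = 1 then 1 else 0) (fun l => if l = 2 then 1 else 0) =
        ![0, 0, p₀⁻¹ • (Ap * Am - Am * Ap)] := by
    rw [muVh_eq_smul_muVhUnscaled, qjac_smul_const, qjac_muVhUnscaled_zero_one_two, ← hc]
    simp [smul_smul, mul_assoc]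
  refine ⟨hmain, fun hall => ?_, fun h i j k => ?_⟩
  · have hcomm : p₀⁻¹ • (Ap * Am - Am * Ap) = 0 := by
      simpa [hmain] using congrFun (hall 0 1 2) 2
    exact sub_eq_zero.mp ((smul_eq_zero.mp hcomm).resolve_left (inv_ne_zero hp₀.ne'))
  · rw [muVh_eq_smul_muVhUnscaled, qjac_smul_const,
      qjac_muVhUnscaled_single_eq_zero Ap Am h, smul_zero]
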